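/- arXiv:2406.14276 — 3 statements merged into one kernel-verified Lean document; each statement's English description precedes it below -/
import Mathlib

section
/- Let A be a commutative multiplicative hyperring with identity and let Q be a (u,v)-absorbing 𝒞-hyperideal of A for u,v ∈ ℕ with u > v. Then rad(Q) = {x ∈ A : xᵛ ⊆ Q}. -/
/-- A commutative multiplicative hyperring with identity: `(A,+)` is a commutative group,
`∘ = hmul` is a commutative associative hyperoperation with nonempty values, satisfying
`x∘(y+z) ⊆ x∘y + x∘z`, `x∘(−y) = (−x)∘y = −(x∘y)`, and `a ∈ a∘1` for all `a`. -/
class CommHyperring (A : Type*) [AddCommGroup A] [One A] where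
  hmul : A → A → Set A
  hmul_nonempty : ∀ x y : A, (hmul x y).Nonempty
  hmul_comm : ∀ x y : A, hmul x y = hmul y x
  hmul_assoc : ∀ x y z : A, (⋃ a ∈ hmul y z, hmul x a) = ⋃ b ∈ hmul x y, hmul b z
  hmul_add : ∀ x y z : A, hmul x (y + z) ⊆ Set.image2 (· + ·) (hmul x y) (hmul x z)
  hmul_neg : ∀ x y : A, hmul x (-y) = Neg.neg '' hmul x y
  neg_hmul : ∀ x y : A, hmul (-x) y = Neg.neg '' hmul x y
  one_mem : ∀ a : A, a ∈ hmul a 1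

open CommHyperring

variable {A : Type*} [AddCommGroup A] [One A] [CommHyperring A]

/-- The hyperoperation extended to subsets: `X∘Y = ⋃_{x∈X, y∈Y} x∘y`. -/
def sMul (X Y : Set A) : Set A := ⋃ x ∈ X, ⋃ y ∈ Y, hmul x y

/-- The product `x₁∘⋯∘xₙ` of the members of a list. -/
def hProd : List A → Set A
  | [] => {1}
  | [a] => {a}
  | a :: l => ⋃ c ∈ hProd l, hmul a c

/-- `xⁿ = x∘⋯∘x` (`n` factors). -/
def hPow (a : A) (n : ℕ) : Set A := hProd (List.replicate n a)

/-- `a` is a unit if `1 ∈ a∘b` for some `b`. -/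
def IsUnitH (a : A) : Prop := ∃ b : A, (1 : A) ∈ hmul a b

/-- A hyperideal of `A`. -/
def IsHyperideal (B : Set A) : Prop :=
  B.Nonempty ∧ (∀ x ∈ B, ∀ y ∈ B, x - y ∈ B) ∧ ∀ r : A, ∀ x ∈ B, hmul r x ⊆ B

def IsProperHyperideal (B : Set A) : Prop := IsHyperideal B ∧ B ≠ Set.univ

/-- A prime hyperideal. -/
def IsPrimeHyperideal (B : Set A) : Prop :=
  IsProperHyperideal B ∧ ∀ x y : A, hmul x y ⊆ B → x ∈ B ∨ y ∈ B

/-- The prime radical: the intersection of all prime hyperideals containing `B`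
(`= A` if there are none). -/
def radH (B : Set A) : Set A := ⋂₀ {P : Set A | IsPrimeHyperideal P ∧ B ⊆ P}

/-- A `𝒞`-hyperideal: meets a finite product `⇒` contains it. -/
def IsCHyperideal (B : Set A) : Prop :=
  IsHyperideal B ∧ ∀ l : List A, l ≠ [] → (hProd l ∩ B).Nonempty → hProd l ⊆ B

def setAdd (X Y : Set A) : Set A := Set.image2 (· + ·) X Y

/-- The sum `C₁ + ⋯ + Cₙ` of the finite products coded by a list of lists. -/
def sumProds (L : List (List A)) : Set A := L.foldr (fun l S => setAdd (hProd l) S) {0}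

/-- A strong `𝒞`-hyperideal: meets a finite sum of finite products `⇒` contains it. -/
def IsStrongCHyperideal (B : Set A) : Prop :=
  IsHyperideal B ∧ ∀ L : List (List A), L ≠ [] → (∀ l ∈ L, l ≠ []) →
    (sumProds L ∩ B).Nonempty → sumProds L ⊆ B

/-- A `v`-absorbing hyperideal. -/
def IsNAbsorbing (Q : Set A) (v : ℕ) : Prop :=
  IsProperHyperideal Q ∧ ∀ l : List A, l.length = v + 1 → hProd l ⊆ Q →
    ∃ l', l'.Sublist l ∧ l'.length = v ∧ hProd l' ⊆ Q

/-- A `(u,v)`-absorbing hyperideal. -/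
def IsUVAbsorbing (Q : Set A) (u v : ℕ) : Prop :=
  IsProperHyperideal Q ∧ ∀ l : List A, l.length = u → (∀ x ∈ l, ¬IsUnitH x) → hProd l ⊆ Q →
    ∃ l', l'.Sublist l ∧ l'.length = v ∧ hProd l' ⊆ Q

/-- An `AB`-`(u,v)`-absorbing hyperideal. -/
def IsABUVAbsorbing (Q : Set A) (u v : ℕ) : Prop :=
  IsProperHyperideal Q ∧ ∀ l : List A, l.length = u → hProd l ⊆ Q →
    ∃ l', l'.Sublist l ∧ l'.length = v ∧ hProd l' ⊆ Q

/-- A `(u,v)`-absorbing prime hyperideal. -/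
def IsUVAbsorbingPrime (Q : Set A) (u v : ℕ) : Prop :=
  IsProperHyperideal Q ∧ ∀ l : List A, l.length = u → (∀ x ∈ l, ¬IsUnitH x) → hProd l ⊆ Q →
    hProd (l.take v) ⊆ Q ∨ hProd (l.drop v) ⊆ Q

/-- A maximal hyperideal. -/
def IsMaximalHyperideal (M : Set A) : Prop :=
  IsProperHyperideal M ∧ ∀ B : Set A, IsHyperideal B → M ⊂ B → B = Set.univ

/-- `A` is local if it has exactly one maximal hyperideal. -/
def IsLocalH (A : Type*) [AddCommGroup A] [One A] [CommHyperring A] : Prop :=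
  ∃! M : Set A, IsMaximalHyperideal M

/-- `P` is a prime hyperideal minimal over `Q`. -/
def MinimalPrimeOver (Q P : Set A) : Prop :=
  IsPrimeHyperideal P ∧ Q ⊆ P ∧
    ∀ P' : Set A, IsPrimeHyperideal P' → Q ⊆ P' → P' ⊆ P → P' = P

/-- `Iⁿ = ⋃ {x₁∘⋯∘xₙ : xᵢ ∈ I}`. -/
def idealPow (I : Set A) (n : ℕ) : Set A :=
  ⋃ l ∈ {l : List A | l.length = n ∧ ∀ x ∈ l, x ∈ I}, hProd l

/-- `I₁∘⋯∘Iₙ = ⋃ {x₁∘⋯∘xₙ : xᵢ ∈ Iᵢ}`. -/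
def idealProd (L : List (Set A)) : Set A :=
  ⋃ l ∈ {l : List A | List.Forall₂ (· ∈ ·) l L}, hProd l

/-- `Abs(Q)`: the minimal `v` such that `Q` is `v`-absorbing. -/
noncomputable def AbsN (Q : Set A) : ℕ := sInf {v : ℕ | IsNAbsorbing Q v}

/-- `abs(Q)`: the minimal `v` such that `Q` is `(Abs(Q)+1, v)`-absorbing. -/
noncomputable def absN (Q : Set A) : ℕ := sInf {v : ℕ | IsUVAbsorbing Q (AbsN Q + 1) v}

/-- A primary hyperideal. -/
def IsPrimaryHyperideal (Q : Set A) : Prop :=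
  IsProperHyperideal Q ∧ ∀ x y : A, hmul x y ⊆ Q → x ∈ Q ∨ ∃ t : ℕ, 1 ≤ t ∧ hPow y t ⊆ Q

/-- `A` is a hyperfield if every nonzero element is a unit. -/
def IsHyperfield (A : Type*) [AddCommGroup A] [One A] [CommHyperring A] : Prop :=
  ∀ x : A, x ≠ 0 → IsUnitH x

/-- `(Q : x) = {a : a∘x ⊆ Q}`. -/
def colonH (Q : Set A) (x : A) : Set A := {a : A | hmul a x ⊆ Q}

/-- `J(A)`: the intersection of all maximal hyperideals of `A`. -/
def JacobsonH (A : Type*) [AddCommGroup A] [One A] [CommHyperring A] : Set A :=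
  ⋂₀ {M : Set A | IsMaximalHyperideal M}

/-! For `x ∈ rad(Q)` some power `xⁿ` lies in `Q`: otherwise the powers of `x` form a
multiplicatively closed set disjoint from `Q` (a `𝒞`-hyperideal meeting `xⁿ` contains it), and a
hyperideal maximal among those disjoint from it is prime, by the usual colon-ideal argument.
Then `x` is not a unit, and `(u,v)`-absorption applied to `x∘⋯∘x∘c`, with `u - 1` factors `x`
and `c ∈ xᵏ`, `k = m - v + 1`, lowers the exponent `m + (u - v)` to `m` as long as `v ≤ m`:
either `xᵛ ⊆ Q`, or `x^(v-1)∘c ⊆ Q` and then `xᵐ = x^(v-1+k) ⊆ Q` because `Q` is a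
`𝒞`-hyperideal. -/

lemma exists_hmul_assoc {x y z w q : A} (hw : w ∈ hmul x y) (hq : q ∈ hmul w z) :
    ∃ c ∈ hmul y z, q ∈ hmul x c := by
  have : q ∈ ⋃ b ∈ hmul x y, hmul b z := Set.mem_biUnion hw hq
  simpa [← hmul_assoc] using this

lemma exists_hmul_assoc' {x y z c q : A} (hc : c ∈ hmul y z) (hq : q ∈ hmul x c) :
    ∃ w ∈ hmul x y, q ∈ hmul w z := by
  have : q ∈ ⋃ c ∈ hmul y z, hmul x c := Set.mem_biUnion hc hq
  simpa [hmul_assoc] using this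

lemma mem_sMul {X Y : Set A} {a : A} : a ∈ sMul X Y ↔ ∃ x ∈ X, ∃ y ∈ Y, a ∈ hmul x y := by
  simp [sMul]

lemma sMul_mono {X X' Y Y' : Set A} (hX : X ⊆ X') (hY : Y ⊆ Y') : sMul X Y ⊆ sMul X' Y' :=
  Set.biUnion_mono hX fun _ _ => Set.biUnion_mono hY fun _ _ => subset_rfl

lemma sMul_assoc (X Y Z : Set A) : sMul (sMul X Y) Z = sMul X (sMul Y Z) := by
  ext a
  simp only [mem_sMul]
  constructor
  · rintro ⟨w, ⟨x, hx, y, hy, hw⟩, z, hz, h⟩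
    obtain ⟨c, hc, hq⟩ := exists_hmul_assoc hw h
    exact ⟨x, hx, c, ⟨y, hy, z, hz, hc⟩, hq⟩
  · rintro ⟨x, hx, c, ⟨y, hy, z, hz, hc⟩, h⟩
    obtain ⟨w, hw, hq⟩ := exists_hmul_assoc' hc h
    exact ⟨w, ⟨x, hx, y, hy, hw⟩, z, hz, hq⟩

lemma hProd_cons {a : A} {l : List A} (hl : l ≠ []) :
    hProd (a :: l) = sMul {a} (hProd l) := by
  obtain ⟨b, l', rfl⟩ := List.exists_cons_of_ne_nil hl
  simp [hProd, sMul]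

lemma hProd_nonempty (l : List A) : (hProd l).Nonempty := by
  induction l with
  | nil => exact ⟨1, rfl⟩
  | cons a l ih =>
    rcases eq_or_ne l [] with rfl | hl
    · exact ⟨a, rfl⟩
    · obtain ⟨c, hc⟩ := ih
      obtain ⟨q, hq⟩ := hmul_nonempty a c
      exact ⟨q, hProd_cons hl ▸ mem_sMul.2 ⟨a, rfl, c, hc, hq⟩⟩

lemma hProd_append {l₁ l₂ : List A} (h₁ : l₁ ≠ []) (h₂ : l₂ ≠ []) :
    hProd (l₁ ++ l₂) = sMul (hProd l₁) (hProd l₂) := by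
  induction l₁ with
  | nil => exact absurd rfl h₁
  | cons a l ih =>
    rcases eq_or_ne l [] with rfl | hl
    · exact hProd_cons h₂
    · rw [List.cons_append, hProd_cons (by simp [hl]), ih hl, hProd_cons hl, sMul_assoc]

lemma hPow_nonempty (a : A) (n : ℕ) : (hPow a n).Nonempty := hProd_nonempty _

lemma hPow_add {a : A} {m n : ℕ} (hm : 0 < m) (hn : 0 < n) :
    hPow a (m + n) = sMul (hPow a m) (hPow a n) := by
  rw [hPow, List.replicate_add, hProd_append (by simp; omega) (by simp; omega), hPow, hPow]

lemma mem_hPow_succ {a c : A} {n : ℕ} (hn : 0 < n) :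
    c ∈ hPow a (n + 1) ↔ ∃ d ∈ hPow a n, c ∈ hmul a d := by
  rw [hPow, List.replicate_succ, hProd_cons (by simp; omega), mem_sMul]
  simp [hPow]

lemma hProd_replicate_append_singleton_subset {x c : A} {k : ℕ} (hk : 0 < k)
    (hc : c ∈ hPow x k) (n : ℕ) : hProd (List.replicate n x ++ [c]) ⊆ hPow x (n + k) := by
  rcases Nat.eq_zero_or_pos n with rfl | hn
  · simpa [hProd] using hc
  · rw [hProd_append (by simp; omega) (by simp), hPow_add hn hk]
    exact sMul_mono subset_rfl (by simpa [hProd] using hc)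

lemma List.sublist_replicate_append_singleton {α : Type*} {a b : α} {n : ℕ} {l : List α}
    (h : l.Sublist (List.replicate n a ++ [b])) :
    ∃ m, l = List.replicate m a ∨ l = List.replicate m a ++ [b] := by
  obtain ⟨l₁, l₂, rfl, h₁, h₂⟩ := List.sublist_append_iff.1 h
  obtain ⟨m, -, rfl⟩ := List.sublist_replicate_iff.1 h₁
  refine ⟨m, ?_⟩
  cases h₂ with
  | cons _ h => exact .inl (by rw [List.sublist_nil.1 h, List.append_nil])
  | cons_cons _ h => exact .inr (by rw [List.sublist_nil.1 h])

lemma IsUnitH.of_mem_hPow {x c : A} {n : ℕ} (hc : c ∈ hPow x n) (hn : 0 < n)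
    (h : IsUnitH c) : IsUnitH x := by
  rcases n with _ | _ | n
  · omega
  · rwa [← Set.mem_singleton_iff.1 hc]
  · obtain ⟨d, -, hcd⟩ := (mem_hPow_succ n.succ_pos).1 hc
    obtain ⟨b, hb⟩ := h
    obtain ⟨e, -, he⟩ := exists_hmul_assoc hcd hb
    exact ⟨e, he⟩

lemma IsHyperideal.zero_mem {B : Set A} (hB : IsHyperideal B) : (0 : A) ∈ B := by
  obtain ⟨⟨x, hx⟩, hsub, -⟩ := hB
  simpa using hsub x hx x hx

lemma IsHyperideal.hmul_subset_left {B : Set A} (hB : IsHyperideal B) {x : A} (hx : x ∈ B)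
    (r : A) : hmul x r ⊆ B := by
  rw [hmul_comm]
  exact hB.2.2 r x hx

lemma IsHyperideal.sMul_subset_left {B X : Set A} (hB : IsHyperideal B) (hX : X ⊆ B)
    (Y : Set A) : sMul X Y ⊆ B := by
  intro a ha
  obtain ⟨x, hx, y, -, h⟩ := mem_sMul.1 ha
  exact hB.hmul_subset_left (hX hx) y h

lemma IsHyperideal.hPow_subset_of_le {B : Set A} (hB : IsHyperideal B) {a : A} {m n : ℕ}
    (hm : 0 < m) (hmn : m ≤ n) (h : hPow a m ⊆ B) : hPow a n ⊆ B := by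
  obtain ⟨k, rfl⟩ := Nat.exists_eq_add_of_le hmn
  rcases Nat.eq_zero_or_pos k with rfl | hk
  · exact h
  · rw [hPow_add hm hk]
    exact hB.sMul_subset_left h _

lemma isHyperideal_colonH {P : Set A} (hP : IsHyperideal P) (c : A) :
    IsHyperideal (colonH P c) := by
  refine ⟨⟨0, hP.hmul_subset_left hP.zero_mem c⟩, fun a ha a' ha' q hq => ?_,
    fun r a ha q hq => ?_⟩
  · rw [hmul_comm, sub_eq_add_neg] at hq
    obtain ⟨p, hp, _, hp', rfl⟩ := hmul_add c a (-a') hq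
    rw [hmul_neg] at hp'
    obtain ⟨p', hp', rfl⟩ := hp'
    rw [hmul_comm] at hp hp'
    simpa [sub_eq_add_neg] using hP.2.1 p (ha hp) p' (ha' hp')
  · intro z hz
    obtain ⟨e, he, hze⟩ := exists_hmul_assoc hq hz
    exact hP.2.2 r e (ha he) hze

lemma IsHyperideal.subset_colonH {P : Set A} (hP : IsHyperideal P) (c : A) : P ⊆ colonH P c :=
  fun _ hp => hP.hmul_subset_left hp c

lemma IsHyperideal.sUnion_of_isChain {C : Set (Set A)} (hC : ∀ I ∈ C, IsHyperideal I)
    (hchain : IsChain (· ⊆ ·) C) (hne : C.Nonempty) : IsHyperideal (⋃₀ C) := by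
  obtain ⟨I₀, hI₀⟩ := hne
  refine ⟨⟨0, I₀, hI₀, (hC I₀ hI₀).zero_mem⟩, ?_, ?_⟩
  · rintro x ⟨I, hI, hxI⟩ y ⟨J, hJ, hyJ⟩
    rcases hchain.total hI hJ with h | h
    · exact ⟨J, hJ, (hC J hJ).2.1 x (h hxI) y hyJ⟩
    · exact ⟨I, hI, (hC I hI).2.1 x hxI y (h hyJ)⟩
  · rintro r x ⟨I, hI, hxI⟩
    exact ((hC I hI).2.2 r x hxI).trans (Set.subset_sUnion_of_mem hI)

lemma IsHyperideal.isPrimeHyperideal_of_maximal_disjoint {P M : Set A} (hP : IsHyperideal P)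
    (hM : M.Nonempty) (hMmul : ∀ α ∈ M, ∀ β ∈ M, hmul α β ⊆ M) (hPM : Disjoint P M)
    (hmax : ∀ I, IsHyperideal I → P ⊆ I → Disjoint I M → I ⊆ P) : IsPrimeHyperideal P := by
  obtain ⟨m, hm⟩ := hM
  refine ⟨⟨hP, fun h => Set.disjoint_left.1 hPM (h ▸ Set.mem_univ m) hm⟩, fun a b hab => ?_⟩
  have colon_meets : ∀ c d, hmul c d ⊆ P → c ∉ P → ∃ α ∈ M, hmul α d ⊆ P := by
    intro c d hcd hc
    by_contra! h
    exact hc (hmax _ (isHyperideal_colonH hP d) (hP.subset_colonH d)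
      (Set.disjoint_right.2 fun α hα hαP => h α hα hαP) hcd)
  by_contra! hneither
  obtain ⟨α, hαM, hα⟩ := colon_meets a b hab hneither.1
  obtain ⟨β, hβM, hβ⟩ := colon_meets b α (by rwa [hmul_comm]) hneither.2
  obtain ⟨γ, hγ⟩ := hmul_nonempty β α
  exact Set.disjoint_left.1 hPM (hβ hγ) (hMmul β hβM α hαM hγ)

lemma exists_isPrimeHyperideal_disjoint {Q M : Set A} (hQ : IsHyperideal Q)
    (hM : M.Nonempty) (hMmul : ∀ α ∈ M, ∀ β ∈ M, hmul α β ⊆ M) (hQM : Disjoint Q M) :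
    ∃ P, IsPrimeHyperideal P ∧ Q ⊆ P ∧ Disjoint P M := by
  obtain ⟨P, hQP, ⟨hP, -, hPM⟩, hmax⟩ :=
    zorn_subset_nonempty {I | IsHyperideal I ∧ Q ⊆ I ∧ Disjoint I M}
      (fun C hCS hchain hne => ⟨⋃₀ C,
        ⟨IsHyperideal.sUnion_of_isChain (fun I hI => (hCS hI).1) hchain hne,
          hne.elim fun I hI => (hCS hI).2.1.trans (Set.subset_sUnion_of_mem hI),
          Set.disjoint_sUnion_left.2 fun I hI => (hCS hI).2.2⟩,
        fun _ => Set.subset_sUnion_of_mem⟩)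
      Q ⟨hQ, subset_rfl, hQM⟩
  exact ⟨P, hP.isPrimeHyperideal_of_maximal_disjoint hM hMmul hPM
    fun I hI hPI hIM => hmax ⟨hI, hQP.trans hPI, hIM⟩ hPI, hQP, hPM⟩

lemma IsPrimeHyperideal.mem_of_hPow_subset {P : Set A} (hP : IsPrimeHyperideal P) {a : A}
    {n : ℕ} (hn : 0 < n) (h : hPow a n ⊆ P) : a ∈ P := by
  induction n with
  | zero => omega
  | succ n ih =>
    rcases Nat.eq_zero_or_pos n with rfl | hn'
    · exact h rfl
    · by_contra ha
      refine ha (ih hn' fun c hc => (hP.2 a c fun q hq => h ?_).resolve_left ha)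
      exact (mem_hPow_succ hn').2 ⟨c, hc, hq⟩

lemma IsProperHyperideal.not_isUnitH_of_hPow_subset {Q : Set A} (hQ : IsProperHyperideal Q)
    {x : A} {n : ℕ} (hn : 0 < n) (h : hPow x n ⊆ Q) : ¬IsUnitH x := by
  rintro ⟨b, hb⟩
  rw [hmul_comm] at hb
  induction n with
  | zero => omega
  | succ n ih =>
    rcases Nat.eq_zero_or_pos n with rfl | hn'
    · exact hQ.2 (Set.eq_univ_of_forall fun a =>
        hQ.1.2.2 a 1 (hQ.1.2.2 b x (h rfl) hb) (CommHyperring.one_mem a))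
    · refine ih hn' fun y hy => ?_
      have hy1 : y ∈ hmul 1 y := by
        rw [hmul_comm]
        exact CommHyperring.one_mem y
      obtain ⟨e, he, hye⟩ := exists_hmul_assoc hb hy1
      exact hQ.1.2.2 b e (h ((mem_hPow_succ hn').2 ⟨y, hy, he⟩)) hye

def hPowers (x : A) : Set A := ⋃ n, hPow x (n + 1)

lemma mem_hPowers_self (x : A) : x ∈ hPowers x := Set.mem_iUnion.2 ⟨0, rfl⟩

lemma hmul_subset_hPowers {x α β : A} (hα : α ∈ hPowers x) (hβ : β ∈ hPowers x) :
    hmul α β ⊆ hPowers x := by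
  obtain ⟨m, hα⟩ := Set.mem_iUnion.1 hα
  obtain ⟨n, hβ⟩ := Set.mem_iUnion.1 hβ
  refine fun γ hγ => Set.mem_iUnion.2 ⟨m + n + 1, ?_⟩
  rw [show m + n + 1 + 1 = (m + 1) + (n + 1) by omega, hPow_add m.succ_pos n.succ_pos]
  exact mem_sMul.2 ⟨α, hα, β, hβ, hγ⟩

lemma exists_hPow_subset_of_mem_radH {Q : Set A} (hC : IsCHyperideal Q) {x : A}
    (hx : x ∈ radH Q) : ∃ n, hPow x (n + 1) ⊆ Q := by
  by_contra! h
  have hQx : Disjoint Q (hPowers x) := Set.disjoint_right.2 fun y hy hyQ => by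
    obtain ⟨n, hn⟩ := Set.mem_iUnion.1 hy
    exact h n (hC.2 _ (by simp) ⟨y, hn, hyQ⟩)
  obtain ⟨P, hP, hQP, hPx⟩ := exists_isPrimeHyperideal_disjoint hC.1 ⟨x, mem_hPowers_self x⟩
    (fun _ hα _ hβ => hmul_subset_hPowers hα hβ) hQx
  exact Set.disjoint_left.1 hPx (Set.mem_sInter.1 hx P ⟨hP, hQP⟩) (mem_hPowers_self x)

lemma IsUVAbsorbing.hPow_subset_of_hPow_add_sub_subset {Q : Set A} {u v : ℕ}
    (habs : IsUVAbsorbing Q u v) (hC : IsCHyperideal Q) (hv : 0 < v) (hvu : v < u) {x : A}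
    (hx : ¬IsUnitH x) {m : ℕ} (hvm : v ≤ m) (h : hPow x (m + (u - v)) ⊆ Q) :
    hPow x m ⊆ Q := by
  obtain ⟨c, hc⟩ := hPow_nonempty x (m - v + 1)
  have hprod := hProd_replicate_append_singleton_subset (Nat.succ_pos _) hc
  have hnonunit : ∀ y ∈ List.replicate (u - 1) x ++ [c], ¬IsUnitH y := by
    simp only [List.mem_append, List.mem_replicate, List.mem_singleton]
    rintro y (⟨-, rfl⟩ | rfl)
    exacts [hx, fun hcu => hx (hcu.of_mem_hPow hc (Nat.succ_pos _))]
  have hprodQ : hProd (List.replicate (u - 1) x ++ [c]) ⊆ Q := by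
    refine (hprod (u - 1)).trans ?_
    rwa [show u - 1 + (m - v + 1) = m + (u - v) by omega]
  obtain ⟨l, hl, hlen, hlQ⟩ := habs.2 _ (by simp; omega) hnonunit hprodQ
  obtain ⟨n, rfl | rfl⟩ := List.sublist_replicate_append_singleton hl
  · rw [List.length_replicate] at hlen
    subst hlen
    exact hC.1.hPow_subset_of_le hv hvm hlQ
  · simp only [List.length_append, List.length_replicate, List.length_singleton] at hlen
    obtain ⟨y, hy⟩ := hProd_nonempty (List.replicate n x ++ [c])
    have := hC.2 _ (by simp) ⟨y, hprod n hy, hlQ hy⟩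
    rwa [show n + (m - v + 1) = m by omega] at this

lemma IsUVAbsorbing.hPow_subset_of_hPow_subset {Q : Set A} {u v : ℕ}
    (habs : IsUVAbsorbing Q u v) (hC : IsCHyperideal Q) (hv : 0 < v) (hvu : v < u) {x : A}
    {n : ℕ} (hn : 0 < n) (h : hPow x n ⊆ Q) : hPow x v ⊆ Q := by
  have hx := habs.1.not_isUnitH_of_hPow_subset hn h
  suffices ∀ k, hPow x (v + k * (u - v)) ⊆ Q → hPow x v ⊆ Q from
    this n (hC.1.hPow_subset_of_le hn (by nlinarith [Nat.sub_pos_of_lt hvu]) h)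
  intro k
  induction k with
  | zero => simp
  | succ k ih =>
    intro hk
    rw [add_mul, one_mul, ← add_assoc] at hk
    exact ih (habs.hPow_subset_of_hPow_add_sub_subset hC hv hvu hx (by omega) hk)

/-- if `Q` is a `(u,v)`-absorbing `𝒞`-hyperideal then
`rad(Q) = {x : xᵛ ⊆ Q}`. -/
theorem radH_eq_of_uv_absorbing (Q : Set A) (u v : ℕ) (hv : 1 ≤ v) (hvu : v < u)
    (hC : IsCHyperideal Q) (habs : IsUVAbsorbing Q u v) :
    radH Q = {x : A | hPow x v ⊆ Q} := by
  ext x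
  refine ⟨fun hx => ?_, fun hxv => Set.mem_sInter.2 fun P ⟨hP, hQP⟩ => ?_⟩
  · obtain ⟨n, hn⟩ := exists_hPow_subset_of_mem_radH hC hx
    exact habs.hPow_subset_of_hPow_subset hC hv hvu n.succ_pos hn
  · exact hP.mem_of_hPow_subset hv (hxv.trans hQP)
end

section
/- Let A be a commutative multiplicative hyperring with identity, let Q be a (u,v)-absorbing hyperideal of A (u,v ∈ ℕ, u > v), let Q₁,…,Q_v be pairwise incomparable prime 𝒞-hyperideals of A with Q ⊆ ∩_{i=1}^v Qᵢ, and let k₁,…,k_v ∈ ℕ. If x₁^{k₁}∘⋯∘x_v^{k_v} ⊆ Q for elements xᵢ ∈ Qᵢ∖(⋃_{j≠i}Q_j), then x₁∘⋯∘x_v ⊆ Q. -/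
open CommHyperring

variable {A : Type*} [AddCommGroup A] [One A] [CommHyperring A]

set_option linter.unusedSectionVars false
set_option linter.unusedVariables false

namespace Scratch

lemma hProd_nil : hProd ([] : List A) = {1} := rfl

lemma hProd_singleton (a : A) : hProd [a] = {a} := rfl

lemma hProd_cons (a : A) {l : List A} (h : l ≠ []) :
    hProd (a :: l) = ⋃ c ∈ hProd l, hmul a c := by
  cases l with
  | nil => exact absurd rfl h
  | cons b t => rfl

lemma mem_hProd_cons {a d : A} {l : List A} (h : l ≠ []) :
    d ∈ hProd (a :: l) ↔ ∃ c ∈ hProd l, d ∈ hmul a c := by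
  rw [hProd_cons a h]; simp

lemma hProd_nonempty (l : List A) : (hProd l).Nonempty := by
  induction l with
  | nil => exact ⟨1, rfl⟩
  | cons a t ih =>
    cases t with
    | nil => exact ⟨a, rfl⟩
    | cons b t' =>
      obtain ⟨c, hc⟩ := ih
      obtain ⟨d, hd⟩ := hmul_nonempty a c
      refine ⟨d, ?_⟩
      rw [mem_hProd_cons (by simp)]
      exact ⟨c, hc, hd⟩

lemma hProd_cons_cons (a c : A) (w : List A) :
    hProd (a :: c :: w) = ⋃ e ∈ hmul a c, hProd (e :: w) := by
  cases w with
  | nil =>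
    show (⋃ t ∈ hProd [c], hmul a t) = _
    simp [hProd_singleton]
  | cons b w' =>
    ext d
    rw [mem_hProd_cons (by simp)]
    simp only [Set.mem_iUnion, exists_prop]
    constructor
    · rintro ⟨t, ht, hdt⟩
      rw [mem_hProd_cons (by simp)] at ht
      obtain ⟨s, hs, hts⟩ := ht
      have : d ∈ ⋃ t ∈ hmul c s, hmul a t := by
        simp only [Set.mem_iUnion, exists_prop]; exact ⟨t, hts, hdt⟩
      rw [hmul_assoc a c s] at this
      simp only [Set.mem_iUnion, exists_prop] at this
      obtain ⟨e, he, hde⟩ := this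
      refine ⟨e, he, ?_⟩
      rw [mem_hProd_cons (by simp)]
      exact ⟨s, hs, hde⟩
    · rintro ⟨e, he, hd⟩
      rw [mem_hProd_cons (by simp)] at hd
      obtain ⟨s, hs, hde⟩ := hd
      have : d ∈ ⋃ b ∈ hmul a c, hmul b s := by
        simp only [Set.mem_iUnion, exists_prop]; exact ⟨e, he, hde⟩
      rw [← hmul_assoc a c s] at this
      simp only [Set.mem_iUnion, exists_prop] at this
      obtain ⟨t, hts, hdt⟩ := this
      refine ⟨t, ?_, hdt⟩
      rw [mem_hProd_cons (by simp)]
      exact ⟨s, hs, hts⟩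

lemma hProd_swap (a b : A) (l : List A) : hProd (a :: b :: l) = hProd (b :: a :: l) := by
  rw [hProd_cons_cons, hProd_cons_cons, hmul_comm a b]

lemma hProd_perm : ∀ {l₁ l₂ : List A}, l₁.Perm l₂ → hProd l₁ = hProd l₂ := by
  intro l₁ l₂ h
  induction h with
  | nil => rfl
  | cons a h ih =>
    rename_i t₁ t₂
    cases t₁ with
    | nil => rw [← h.nil_eq]
    | cons b s =>
      have ht₂ : t₂ ≠ [] := by
        intro hh; rw [hh] at h; exact absurd h.symm.nil_eq (by simp)
      rw [hProd_cons a (by simp), hProd_cons a ht₂, ih]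
  | swap x y l => exact hProd_swap y x l
  | trans h₁ h₂ ih₁ ih₂ => exact ih₁.trans ih₂

lemma hProd_append {z : List A} (hz : z ≠ []) (w : List A) :
    hProd (z ++ w) = ⋃ c ∈ hProd z, hProd (c :: w) := by
  induction z with
  | nil => exact absurd rfl hz
  | cons a z' ih =>
    cases z' with
    | nil => simp [hProd_singleton]
    | cons b t =>
      have hz' : (b :: t) ≠ [] := by simp
      have : hProd ((a :: b :: t) ++ w) = ⋃ tt ∈ hProd ((b :: t) ++ w), hmul a tt := by
        rw [List.cons_append, hProd_cons a (by simp)]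
      rw [this, ih hz']
      ext d
      simp only [Set.mem_iUnion, exists_prop]
      constructor
      · rintro ⟨t1, ⟨c, hc, ht1⟩, hdt1⟩
        have : d ∈ hProd (a :: c :: w) := by
          rw [mem_hProd_cons (by simp)]; exact ⟨t1, ht1, hdt1⟩
        rw [hProd_cons_cons] at this
        simp only [Set.mem_iUnion, exists_prop] at this
        obtain ⟨e, he, hd⟩ := this
        have : e ∈ hProd (a :: b :: t) := by
          rw [mem_hProd_cons (by simp)]; exact ⟨c, hc, he⟩
        exact ⟨e, this, hd⟩
      · rintro ⟨e, he, hd⟩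
        rw [mem_hProd_cons (by simp)] at he
        obtain ⟨c, hc, he⟩ := he
        have : d ∈ hProd (a :: c :: w) := by
          rw [hProd_cons_cons]
          simp only [Set.mem_iUnion, exists_prop]
          exact ⟨e, he, hd⟩
        rw [mem_hProd_cons (by simp)] at this
        obtain ⟨t1, ht1, hdt1⟩ := this
        exact ⟨t1, ⟨c, hc, ht1⟩, hdt1⟩

lemma hProd_cons_subset_append {c : A} {z : List A} (hz : z ≠ []) (hc : c ∈ hProd z)
    (w : List A) : hProd (c :: w) ⊆ hProd (z ++ w) := by
  rw [hProd_append hz]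
  exact Set.subset_iUnion₂ (s := fun c _ => hProd (c :: w)) c hc


lemma hProd_cons_subset {B : Set A} (hB : IsHyperideal B) {l : List A} (hl : l ≠ [])
    (h : hProd l ⊆ B) (a : A) : hProd (a :: l) ⊆ B := by
  rw [hProd_cons a hl]
  exact Set.iUnion₂_subset fun c hc => hB.2.2 a c (h hc)

lemma hProd_append_replicate_subset {B : Set A} (hB : IsHyperideal B) {l : List A}
    (hl : l ≠ []) (h : hProd l ⊆ B) (b : A) (k : ℕ) :
    hProd (l ++ List.replicate k b) ⊆ B := by
  induction k with
  | zero => simpa using h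
  | succ n ih =>
    have hperm : (l ++ List.replicate (n+1) b).Perm (b :: (l ++ List.replicate n b)) := by
      rw [List.replicate_succ]
      exact List.perm_middle
    rw [hProd_perm hperm]
    exact hProd_cons_subset hB (by simp [hl]) ih b

lemma one_notMem_proper {B : Set A} (hB : IsProperHyperideal B) : (1 : A) ∉ B := by
  intro h1
  apply hB.2
  apply Set.eq_univ_iff_forall.2
  intro r
  exact hB.1.2.2 r 1 h1 (one_mem r)

lemma not_unit_of_mem_proper {B : Set A} (hB : IsProperHyperideal B) {a : A} (ha : a ∈ B) :
    ¬IsUnitH a := by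
  rintro ⟨b, hb⟩
  apply one_notMem_proper hB
  have : hmul b a ⊆ B := hB.1.2.2 b a ha
  rw [hmul_comm b a] at this
  exact this hb

lemma prime_divisor {P : Set A} (hP : IsPrimeHyperideal P) :
    ∀ {l : List A}, hProd l ⊆ P → ∃ a ∈ l, a ∈ P := by
  intro l
  induction l with
  | nil =>
    intro h
    exact absurd (h rfl) (one_notMem_proper hP.1)
  | cons a t ih =>
    intro h
    cases t with
    | nil => exact ⟨a, by simp, h rfl⟩
    | cons b t' =>
      by_cases ha : a ∈ P
      · exact ⟨a, by simp, ha⟩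
      · have hsub : hProd (b :: t') ⊆ P := by
          intro c hc
          have : hmul a c ⊆ P := by
            intro d hd
            apply h
            rw [mem_hProd_cons (by simp)]
            exact ⟨c, hc, hd⟩
          exact (hP.2 a c this).resolve_left ha
        obtain ⟨e, he, heP⟩ := ih hsub
        exact ⟨e, by simp [he], heP⟩

lemma hProd_replicate_subset {P : Set A} (hP : IsHyperideal P) {b : A} (hb : b ∈ P) :
    ∀ {m : ℕ}, 1 ≤ m → hProd (List.replicate m b) ⊆ P := by
  intro m
  induction m with
  | zero => omega
  | succ n ih =>
    intro _
    cases Nat.eq_or_lt_of_le (Nat.one_le_iff_ne_zero.2 (Nat.succ_ne_zero n)) with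
    | _ =>
      rcases Nat.eq_zero_or_pos n with hn | hn
      · subst hn
        intro c hc
        have : c = b := by simpa [hProd_singleton] using hc
        rwa [this]
      · rw [List.replicate_succ]
        exact hProd_cons_subset hP (by simp; omega) (ih hn) b

lemma notmem_of_mem_hProd_replicate {Pt : Set A} (hprime : IsPrimeHyperideal Pt)
    (hC : IsCHyperideal Pt) {b : A} (hb : b ∉ Pt) {m : ℕ} (hm : 1 ≤ m) {c : A}
    (hc : c ∈ hProd (List.replicate m b)) : c ∉ Pt := by
  intro hcP
  have hne : List.replicate m b ≠ [] := by simp; omega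
  have hsub := hC.2 _ hne ⟨c, hc, hcP⟩
  obtain ⟨e, he, heP⟩ := prime_divisor hprime hsub
  rw [List.eq_of_mem_replicate he] at heP
  exact hb heP

universe uu vv
lemma forall₂_exists_left {α : Type uu} {β : Type vv} {R : α → β → Prop} :
    ∀ {l₁ : List α} {l₂ : List β}, List.Forall₂ R l₁ l₂ → ∀ b ∈ l₂, ∃ a ∈ l₁, R a b := by
  intro l₁ l₂ h
  induction h with
  | nil => simp
  | cons hR hF ih =>
    intro b hb
    rcases List.mem_cons.1 hb with rfl | hb
    · exact ⟨_, by simp, hR⟩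
    · obtain ⟨a, ha, hab⟩ := ih b hb
      exact ⟨a, by simp [ha], hab⟩

lemma forall₂_exists_right {α : Type uu} {β : Type vv} {R : α → β → Prop} :
    ∀ {l₁ : List α} {l₂ : List β}, List.Forall₂ R l₁ l₂ → ∀ a ∈ l₁, ∃ b ∈ l₂, R a b := by
  intro l₁ l₂ h
  induction h with
  | nil => simp
  | cons hR hF ih =>
    intro a ha
    rcases List.mem_cons.1 ha with rfl | ha
    · exact ⟨_, by simp, hR⟩
    · obtain ⟨b, hb, hab⟩ := ih a ha
      exact ⟨b, by simp [hb], hab⟩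

lemma forall₂_nodup_left {α : Type uu} {β : Type vv} {R : α → β → Prop}
    (hfun : ∀ a b₁ b₂, R a b₁ → R a b₂ → b₁ = b₂) :
    ∀ {l₁ : List α} {l₂ : List β}, List.Forall₂ R l₁ l₂ → l₂.Nodup → l₁.Nodup := by
  intro l₁ l₂ h
  induction h with
  | nil => intro _; exact List.nodup_nil
  | @cons a b l₁' l₂' hR hF ih =>
    intro hnd
    rw [List.nodup_cons] at hnd ⊢
    refine ⟨?_, ih hnd.2⟩
    intro hmem
    obtain ⟨b', hb', hab'⟩ := forall₂_exists_right hF a hmem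
    rw [hfun a b' b hab' hR] at hb'
    exact hnd.1 hb'

lemma forall₂_unique_left {α : Type uu} {β : Type vv} {R : α → β → Prop}
    (hfun : ∀ a b₁ b₂, R a b₁ → R a b₂ → b₁ = b₂) :
    ∀ {l₁ : List α} {l₂ : List β}, List.Forall₂ R l₁ l₂ → l₂.Nodup →
      ∀ w ∈ l₁, ∀ a ∈ l₁, ∀ b, R w b → R a b → w = a := by
  intro l₁ l₂ h
  induction h with
  | nil => simp
  | @cons a₀ b₀ l₁' l₂' hR hF ih =>
    intro hnd w hw a ha b hwb hab
    rw [List.nodup_cons] at hnd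
    rcases List.mem_cons.1 hw with hw0 | hw1
    · rcases List.mem_cons.1 ha with ha0 | ha1
      · rw [hw0, ha0]
      · exfalso
        have hb : b = b₀ := hfun w b b₀ hwb (hw0 ▸ hR)
        obtain ⟨b', hb', hab'⟩ := forall₂_exists_right hF a ha1
        rw [hfun a b' b hab' hab, hb] at hb'
        exact hnd.1 hb'
    · rcases List.mem_cons.1 ha with ha0 | ha1
      · exfalso
        have hb : b = b₀ := hfun a b b₀ hab (ha0 ▸ hR)
        obtain ⟨b', hb', hwb'⟩ := forall₂_exists_right hF w hw1
        rw [hfun w b' b hwb' hwb, hb] at hb'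
        exact hnd.1 hb'
      · exact ih hnd.2 w hw1 a ha1 b hwb hab


lemma hProd_cons_mono {l l' : List A} (hl : l ≠ []) (hl' : l' ≠ [])
    (h : hProd l ⊆ hProd l') (c : A) : hProd (c :: l) ⊆ hProd (c :: l') := by
  rw [hProd_cons c hl, hProd_cons c hl']
  refine Set.iUnion₂_subset fun t ht => ?_
  exact Set.subset_iUnion₂ (s := fun t _ => hmul c t) t (h ht)

lemma hProd_tuple_subset_flatten :
    ∀ {cs : List A} {zs : List (List A)},
      List.Forall₂ (fun (c : A) (z : List A) => c ∈ hProd z) cs zs →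
      (∀ z ∈ zs, z ≠ []) → hProd cs ⊆ hProd zs.flatten := by
  intro cs zs h
  induction h with
  | nil => intro _; exact le_refl _
  | @cons c z cs' zs' hc hF ih =>
    intro hz
    have hzne : z ≠ [] := hz z (by simp)
    cases hF with
    | nil =>
      intro d hd
      have hdc : d = c := by simpa [hProd_singleton] using hd
      subst hdc
      simpa using hc
    | @cons c₂ z₂ cs₂ zs₂ hc₂ hF₂ =>
      have hcs' : (c₂ :: cs₂) ≠ [] := by simp
      have hfl : (List.flatten (z₂ :: zs₂)) ≠ [] := by
        have : z₂ ≠ [] := hz z₂ (by simp)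
        simp only [List.flatten_cons]
        intro hcontra
        rcases List.append_eq_nil_iff.1 hcontra with ⟨h1, _⟩
        exact this h1
      have step1 : hProd (c :: c₂ :: cs₂) ⊆ hProd (c :: (z₂ :: zs₂).flatten) := by
        refine hProd_cons_mono hcs' hfl ?_ c
        exact ih (fun w hw => hz w (by simp [hw]))
      refine step1.trans ?_
      have := hProd_cons_subset_append hzne hc ((z₂ :: zs₂).flatten)
      simpa using this

lemma hProd_flatten_subset_of_tuples :
    ∀ {zs : List (List A)}, (∀ z ∈ zs, z ≠ []) → ∀ {S : Set A},
      (∀ cs : List A, List.Forall₂ (fun (c : A) (z : List A) => c ∈ hProd z) cs zs →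
        hProd cs ⊆ S) →
      hProd zs.flatten ⊆ S := by
  intro zs
  induction zs with
  | nil =>
    intro _ S h
    simpa using h [] List.Forall₂.nil
  | cons z zs' ih =>
    intro hz S h
    have hzne : z ≠ [] := hz z (by simp)
    intro d hd
    rw [List.flatten_cons, hProd_append hzne] at hd
    simp only [Set.mem_iUnion, exists_prop] at hd
    obtain ⟨c, hc, hd⟩ := hd
    cases zs' with
    | nil =>
      have hdc : d = c := by simpa [hProd_singleton] using hd
      exact h [c] (List.Forall₂.cons hc List.Forall₂.nil)
        (by simp [hProd_singleton, hdc])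
    | cons z₂ zs₂ =>
      have hfl : (List.flatten (z₂ :: zs₂)) ≠ [] := by
        have : z₂ ≠ [] := hz z₂ (by simp)
        simp only [List.flatten_cons]
        intro hcontra
        rcases List.append_eq_nil_iff.1 hcontra with ⟨h1, _⟩
        exact this h1
      rw [hProd_cons c hfl] at hd
      simp only [Set.mem_iUnion, exists_prop] at hd
      obtain ⟨t, ht, hd⟩ := hd
      have key : hProd (List.flatten (z₂ :: zs₂)) ⊆ {b : A | hmul c b ⊆ S} := by
        refine ih (fun w hw => hz w (by simp [hw])) ?_
        intro cs hcs
        have hcsne : cs ≠ [] := by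
          intro hh
          subst hh
          cases hcs
        intro t' ht'
        show hmul c t' ⊆ S
        have hsub : hProd (c :: cs) ⊆ S := h (c :: cs) (List.Forall₂.cons hc hcs)
        refine fun d' hd' => hsub ?_
        rw [mem_hProd_cons hcsne]
        exact ⟨t', ht', hd'⟩
      exact key ht hd


section Main

variable {Q : Set A} {u v : ℕ} {P : Fin v → Set A} {x : Fin v → A}

lemma supp_fun :
    (∀ (a : A) (b₁ b₂ : Fin v), (a ∈ P b₁ ∧ ∀ t, t ≠ b₁ → a ∉ P t) →
      (a ∈ P b₂ ∧ ∀ t, t ≠ b₂ → a ∉ P t) → b₁ = b₂) := by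
  intro a b₁ b₂ h₁ h₂
  by_contra hne
  exact h₂.2 b₁ hne h₁.1

lemma unif
    (hv : 1 ≤ v) (hvu : v < u)
    (habs : IsUVAbsorbing Q u v)
    (hP : ∀ i, IsPrimeHyperideal (P i) ∧ IsCHyperideal (P i))
    (hQP : Q ⊆ ⋂ i, P i)
    (hx : ∀ i, x i ∈ P i ∧ ∀ j, j ≠ i → x i ∉ P j)
    (i : Fin v)
    (ci : A) (hci1 : ci ∈ P i) (hci2 : ∀ t, t ≠ i → ci ∉ P t)
    (ws : List A)
    (hws : List.Forall₂ (fun (w : A) (j : Fin v) => w ∈ P j ∧ ∀ t, t ≠ j → w ∉ P t)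
      ws ((List.finRange v).erase i))
    (hprem : hProd ((ci :: ws) ++ List.replicate (u - v) (x i)) ⊆ Q) :
    hProd (ci :: ws) ⊆ Q ∨ hProd (x i :: ws) ⊆ Q := by
  set js : List (Fin v) := (List.finRange v).erase i with hjs
  have hjs_nodup : js.Nodup := (List.nodup_finRange v).erase i
  have hjs_mem : ∀ j : Fin v, j ∈ js ↔ j ≠ i := by
    intro j
    rw [hjs, (List.nodup_finRange v).mem_erase_iff]
    simp [List.mem_finRange]
  have hjs_len : js.length = v - 1 := by
    rw [hjs, List.length_erase_of_mem (List.mem_finRange i), List.length_finRange]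
  have hws_len : ws.length = v - 1 := by rw [hws.length_eq, hjs_len]
  -- supp facts about ws members
  have hws_supp : ∀ w ∈ ws, ∃ j : Fin v, j ≠ i ∧ w ∈ P j ∧ ∀ t, t ≠ j → w ∉ P t := by
    intro w hw
    obtain ⟨j, hj, hR⟩ := forall₂_exists_right hws w hw
    exact ⟨j, (hjs_mem j).1 hj, hR⟩
  have hws_notPi : ∀ w ∈ ws, w ∉ P i := by
    intro w hw
    obtain ⟨j, hji, _, hnot⟩ := hws_supp w hw
    exact hnot i (Ne.symm hji)
  -- the absorbing list
  set L : List A := (ci :: ws) ++ List.replicate (u - v) (x i) with hL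
  have hLlen : L.length = u := by
    rw [hL]
    simp [hws_len]
    omega
  have hmemL : ∀ a ∈ L, a = ci ∨ a ∈ ws ∨ a = x i := by
    intro a ha
    rw [hL] at ha
    rcases List.mem_append.1 ha with h1 | h2
    · rcases List.mem_cons.1 h1 with h3 | h4
      · exact Or.inl h3
      · exact Or.inr (Or.inl h4)
    · exact Or.inr (Or.inr (List.eq_of_mem_replicate h2))
  have hnonunit : ∀ y ∈ L, ¬IsUnitH y := by
    intro y hy
    rcases hmemL y hy with rfl | hyw | rfl
    · exact not_unit_of_mem_proper (hP i).1.1 hci1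
    · obtain ⟨j, _, hyPj, _⟩ := hws_supp y hyw
      exact not_unit_of_mem_proper (hP j).1.1 hyPj
    · exact not_unit_of_mem_proper (hP i).1.1 (hx i).1
  obtain ⟨l', hsub, hl'len, hl'Q⟩ := habs.2 L hLlen hnonunit hprem
  have hl'P : ∀ t : Fin v, hProd l' ⊆ P t := by
    intro t d hd
    exact Set.mem_iInter.1 (hQP (hl'Q hd)) t
  -- every member of ws is in l'
  have hws_in : ∀ w ∈ ws, w ∈ l' := by
    intro w hw
    obtain ⟨j, hji, hwPj, hwnot⟩ := hws_supp w hw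
    obtain ⟨a, hal', haPj⟩ := prime_divisor (hP j).1 (hl'P j)
    have haL : a ∈ L := hsub.subset hal'
    rcases hmemL a haL with rfl | haw | rfl
    · exact absurd haPj (hci2 j hji)
    · -- a ∈ ws with a ∈ P j, so a = w
      obtain ⟨j', hj'i, haPj', hanot⟩ := hws_supp a haw
      have hjj' : j' = j := by
        by_contra hne
        exact hanot j (fun hh => hne hh.symm) haPj
      subst hjj'
      have := forall₂_unique_left (supp_fun (P := P)) hws hjs_nodup
        w hw a haw j' ⟨hwPj, hwnot⟩ ⟨haPj', hanot⟩
      rwa [this]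
    · exact absurd haPj ((hx i).2 j hji)
  -- an element of l' in P i
  obtain ⟨e, hel', hePi⟩ := prime_divisor (hP i).1 (hl'P i)
  have heci : e = ci ∨ e = x i := by
    rcases hmemL e (hsub.subset hel') with h1 | h2 | h3
    · exact Or.inl h1
    · exact absurd hePi (hws_notPi e h2)
    · exact Or.inr h3
  -- N := e :: ws is a permutation of l'
  have hws_nodup : ws.Nodup := forall₂_nodup_left (supp_fun (P := P)) hws hjs_nodup
  have hN_nodup : (e :: ws).Nodup := by
    rw [List.nodup_cons]
    exact ⟨fun hh => hws_notPi e hh hePi, hws_nodup⟩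
  have hN_sub : (e :: ws) ⊆ l' := by
    intro a ha
    rcases List.mem_cons.1 ha with rfl | ha
    · exact hel'
    · exact hws_in a ha
  have hN_len : (e :: ws).length = v := by
    simp [hws_len]
    omega
  have hperm : (e :: ws).Perm l' :=
    (hN_nodup.subperm hN_sub).perm_of_length_le (by rw [hl'len, hN_len])
  have hNQ : hProd (e :: ws) ⊆ Q := by
    rw [hProd_perm hperm]
    exact hl'Q
  rcases heci with rfl | rfl
  · exact Or.inl hNQ
  · exact Or.inr hNQ


lemma main_step
    (hv : 1 ≤ v) (hvu : v < u)
    (habs : IsUVAbsorbing Q u v)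
    (hP : ∀ i, IsPrimeHyperideal (P i) ∧ IsCHyperideal (P i))
    (hQP : Q ⊆ ⋂ i, P i)
    (hx : ∀ i, x i ∈ P i ∧ ∀ j, j ≠ i → x i ∉ P j)
    (mm : Fin v → ℕ) (hmm : ∀ t, 1 ≤ mm t) (i : Fin v)
    (h : hProd (List.flatten (List.ofFn fun t => List.replicate (mm t) (x t))) ⊆ Q) :
    hProd (List.flatten (List.ofFn fun t =>
      List.replicate (Function.update mm i 1 t) (x t))) ⊆ Q := by
  classical
  set js : List (Fin v) := (List.finRange v).erase i with hjs
  have hjs_mem : ∀ j : Fin v, j ∈ js ↔ j ≠ i := by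
    intro j
    rw [hjs, (List.nodup_finRange v).mem_erase_iff]
    simp [List.mem_finRange]
  set zs : List (List A) := js.map (fun j => List.replicate (mm j) (x j)) with hzs
  have hzs_ne : ∀ z ∈ zs, z ≠ [] := by
    intro z hz
    rw [hzs] at hz
    obtain ⟨j, _, rfl⟩ := List.mem_map.1 hz
    have := hmm j
    simp
    omega
  -- restated hypothesis
  have hflat : hProd (List.replicate (mm i) (x i) ++ zs.flatten) ⊆ Q := by
    have hperm : (List.ofFn fun t => List.replicate (mm t) (x t)).Perm
        ((List.replicate (mm i) (x i)) :: zs) := by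
      rw [List.ofFn_eq_map, hzs]
      have h1 : (List.finRange v).Perm (i :: js) :=
        List.perm_cons_erase (List.mem_finRange i)
      simpa using h1.map (fun t => List.replicate (mm t) (x t))
    have := hProd_perm (hperm.flatten)
    rw [List.flatten_cons] at this
    rw [← this]
    exact h
  -- supp conditions for tuples
  have hws_supp : ∀ (ws : List A),
      List.Forall₂ (fun (c : A) (z : List A) => c ∈ hProd z) ws zs →
      List.Forall₂ (fun (w : A) (j : Fin v) => w ∈ P j ∧ ∀ t, t ≠ j → w ∉ P t) ws js := by
    intro ws hws
    rw [hzs, List.forall₂_map_right_iff] at hws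
    refine hws.imp ?_
    intro w j hw
    constructor
    · exact hProd_replicate_subset (hP j).1.1.1 (hx j).1 (hmm j) hw
    · intro t ht
      exact notmem_of_mem_hProd_replicate (hP t).1 (hP t).2
        ((hx j).2 t ht) (hmm j) hw
  -- descent
  have descent : ∀ (ws : List A),
      List.Forall₂ (fun (c : A) (z : List A) => c ∈ hProd z) ws zs →
      ∀ a : ℕ, 1 ≤ a →
      (∀ ci ∈ hProd (List.replicate a (x i)), hProd (ci :: ws) ⊆ Q) →
      hProd (x i :: ws) ⊆ Q := by
    intro ws hws a
    induction a with
    | zero => omega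
    | succ n ih =>
      intro _ hd
      rcases Nat.eq_zero_or_pos n with hn | hn
      · subst hn
        exact hd (x i) rfl
      · by_cases hG : hProd (x i :: ws) ⊆ Q
        · exact hG
        · refine ih hn ?_
          intro ci' hci'
          -- build premise for unif
          have hprem : hProd ((ci' :: ws) ++ List.replicate (u - v) (x i)) ⊆ Q := by
            obtain ⟨k, hk⟩ : ∃ k, u - v = k + 1 := ⟨u - v - 1, by omega⟩
            have hperm : ((ci' :: ws) ++ List.replicate (u - v) (x i)).Perm
                ([ci', x i] ++ (ws ++ List.replicate k (x i))) := by
              rw [hk, List.replicate_succ, List.cons_append]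
              exact (List.perm_middle).cons ci'
            rw [hProd_perm hperm, hProd_append (by simp : ([ci', x i] : List A) ≠ [])]
            refine Set.iUnion₂_subset fun dd hdd => ?_
            have hddmem : dd ∈ hProd (List.replicate (n + 1) (x i)) := by
              have hs : hProd (ci' :: [x i]) ⊆
                  hProd (List.replicate n (x i) ++ [x i]) :=
                hProd_cons_subset_append (by simp; omega) hci' [x i]
              rw [← List.replicate_succ'] at hs
              exact hs hdd
            have hddQ : hProd (dd :: ws) ⊆ Q := hd dd hddmem
            have : hProd ((dd :: ws) ++ List.replicate k (x i)) ⊆ Q :=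
              hProd_append_replicate_subset habs.1.1 (by simp) hddQ (x i) k
            simpa using this
          have hci'Pi : ci' ∈ P i :=
            hProd_replicate_subset (hP i).1.1.1 (hx i).1 hn hci'
          have hci'not : ∀ t, t ≠ i → ci' ∉ P t := by
            intro t ht
            exact notmem_of_mem_hProd_replicate (hP t).1 (hP t).2
              ((hx i).2 t ht) hn hci'
          rcases unif hv hvu habs hP hQP hx i ci' hci'Pi hci'not ws
            (hws_supp ws hws) hprem with hl | hr
          · exact hl
          · exact absurd hr hG
  -- d(mm i) for all tuples
  have dmi : ∀ (ws : List A),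
      List.Forall₂ (fun (c : A) (z : List A) => c ∈ hProd z) ws zs →
      ∀ ci ∈ hProd (List.replicate (mm i) (x i)), hProd (ci :: ws) ⊆ Q := by
    intro ws hws ci hci
    have htup : List.Forall₂ (fun (c : A) (z : List A) => c ∈ hProd z)
        (ci :: ws) (List.replicate (mm i) (x i) :: zs) :=
      List.Forall₂.cons hci hws
    have hne : ∀ z ∈ (List.replicate (mm i) (x i) :: zs), z ≠ [] := by
      intro z hz
      rcases List.mem_cons.1 hz with rfl | hz
      · have := hmm i; simp; omega
      · exact hzs_ne z hz
    have := hProd_tuple_subset_flatten htup hne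
    rw [List.flatten_cons] at this
    exact this.trans hflat
  -- conclusion
  have T : ∀ (ws : List A),
      List.Forall₂ (fun (c : A) (z : List A) => c ∈ hProd z) ws zs →
      hProd (x i :: ws) ⊆ Q := by
    intro ws hws
    exact descent ws hws (mm i) (hmm i) (dmi ws hws)
  -- now reassemble
  have hperm2 : (List.ofFn fun t => List.replicate (Function.update mm i 1 t) (x t)).Perm
      ([x i] :: zs) := by
    rw [List.ofFn_eq_map, hzs]
    have h1 : (List.finRange v).Perm (i :: js) :=
      List.perm_cons_erase (List.mem_finRange i)
    have h2 := h1.map (fun t => List.replicate (Function.update mm i 1 t) (x t))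
    simp only [List.map_cons] at h2
    rw [Function.update_self] at h2
    have h3 : js.map (fun t => List.replicate (Function.update mm i 1 t) (x t)) =
        js.map (fun j => List.replicate (mm j) (x j)) := by
      refine List.map_congr_left ?_
      intro j hj
      rw [Function.update_of_ne ((hjs_mem j).1 hj)]
    rw [h3] at h2
    simpa using h2
  rw [hProd_perm hperm2.flatten, List.flatten_cons]
  have hne : ∀ z ∈ ([x i] :: zs), z ≠ [] := by
    intro z hz
    rcases List.mem_cons.1 hz with rfl | hz
    · simp
    · exact hzs_ne z hz
  refine hProd_flatten_subset_of_tuples hne ?_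
  intro cs hcs
  cases hcs with
  | @cons e zz ws zsz he hws =>
    have he' : e = x i := by simpa [hProd_singleton] using he
    subst he'
    exact T ws hws

end Main

lemma flatten_singletons : ∀ {n : ℕ} (f : Fin n → A),
    (List.ofFn fun t => [f t]).flatten = List.ofFn f := by
  intro n
  induction n with
  | zero => intro f; simp
  | succ m ih =>
    intro f
    rw [List.ofFn_succ (f := fun t => [f t]), List.flatten_cons, List.ofFn_succ (f := f)]
    rw [ih (fun t => f t.succ)]
    rfl

end Scratch

/-- with `Q` a `(u,v)`-absorbing hyperideal, `P₁,…,P_v` incomparable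
prime `𝒞`-hyperideals containing `Q`, and `xᵢ ∈ Pᵢ∖⋃_{j≠i}P_j`, if
`x₁^{k₁}∘⋯∘x_v^{k_v} ⊆ Q` then `x₁∘⋯∘x_v ⊆ Q`. -/
theorem hProd_subset_of_pow_subset (Q : Set A) (u v : ℕ) (hv : 1 ≤ v) (hvu : v < u)
    (habs : IsUVAbsorbing Q u v) (P : Fin v → Set A)
    (hP : ∀ i, IsPrimeHyperideal (P i) ∧ IsCHyperideal (P i))
    (hincomp : ∀ i j, i ≠ j → ¬P i ⊆ P j)
    (hQP : Q ⊆ ⋂ i, P i)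
    (kk : Fin v → ℕ) (hkk : ∀ i, 1 ≤ kk i)
    (x : Fin v → A) (hx : ∀ i, x i ∈ P i ∧ ∀ j, j ≠ i → x i ∉ P j)
    (hpow : hProd (List.flatten (List.ofFn fun i => List.replicate (kk i) (x i))) ⊆ Q) :
    hProd (List.ofFn x) ⊆ Q := by

  classical
  have key : ∀ n, n ≤ v →
      hProd (List.flatten (List.ofFn fun t =>
        List.replicate (if t.val < n then 1 else kk t) (x t))) ⊆ Q := by
    intro n
    induction n with
    | zero =>
      intro _
      simpa using hpow
    | succ m ih =>
      intro hm
      have hmv : m < v := by omega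
      have hupd : (Function.update (fun t : Fin v => if t.val < m then 1 else kk t)
          ⟨m, hmv⟩ 1) = (fun t : Fin v => if t.val < m + 1 then 1 else kk t) := by
        funext t
        by_cases ht : t = (⟨m, hmv⟩ : Fin v)
        · subst ht
          rw [Function.update_self]
          simp
        · rw [Function.update_of_ne ht]
          have htm : t.val ≠ m := by
            intro hh
            exact ht (Fin.ext hh)
          by_cases h2 : t.val < m
          · have h3 : t.val < m + 1 := by omega
            simp [h2, h3]
          · have h3 : ¬ t.val < m + 1 := by omega
            simp [h2, h3]
      have hpos : ∀ t : Fin v, 1 ≤ (fun t : Fin v => if t.val < m then 1 else kk t) t := by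
        intro t
        by_cases h2 : t.val < m
        · simp [h2]
        · simp [h2]
          exact hkk t
      have := Scratch.main_step hv hvu habs hP hQP hx
        (fun t : Fin v => if t.val < m then 1 else kk t) hpos ⟨m, hmv⟩ (ih (by omega))
      rwa [hupd] at this
  have hfin := key v (le_refl v)
  have hones : (fun t : Fin v =>
      List.replicate (if t.val < v then 1 else kk t) (x t)) = fun t : Fin v => [x t] := by
    funext t
    simp [t.isLt]
  rw [hones, Scratch.flatten_singletons] at hfin
  exact hfin
end

section
/- Let A be a commutative multiplicative hyperring with identity, let Q be a proper strong 𝒞-hyperideal of A such that a+1 ∉ U(A) for some a ∈ Q, and let u,v ∈ ℕ with u > v. Then Q is an AB-(u,v)-absorbing hyperideal of A if and only if Q is a (u,v)-absorbing hyperideal of A. -/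
open CommHyperring

variable {A : Type*} [AddCommGroup A] [One A] [CommHyperring A]

/-! Units and the elements `a + 1` with `a ∈ Q` cancel from products lying in `Q`: `x∘p ⊆ Q`
forces `p ∈ Q`. For a unit this is associativity; for `a + 1`, the sum `p∘a + p∘1` contains
`p∘(a+1)`, so it meets `Q` and, `Q` being a strong `𝒞`-hyperideal, lies in `Q`; it also contains
`r + p` with `r ∈ p∘a ⊆ Q`. So given `x₁∘⋯∘x_u ⊆ Q`, drop the units, pad the remaining factors back
to `u` with the nonunit `a + 1`, apply `(u,v)`-absorption and cancel the padding from the factors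
it returns. -/

theorem List.Sublist.exists_sublist_length_eq {α : Type*} {l₁ l₂ : List α} (h : l₁.Sublist l₂)
    {n : ℕ} (h₁ : l₁.length ≤ n) (h₂ : n ≤ l₂.length) :
    ∃ l, l₁.Sublist l ∧ l.Sublist l₂ ∧ l.length = n := by
  induction h generalizing n with
  | slnil => exact ⟨[], .slnil, .slnil, by simp at h₂; omega⟩
  | @cons l₁ l₂ a _ ih =>
    rcases Nat.lt_or_ge l₂.length n with hn | hn
    · exact ⟨a :: l₂, ‹l₁.Sublist l₂›.cons a, .refl _, by simp at h₂ ⊢; omega⟩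
    · obtain ⟨l, hl₁, hl₂, hl⟩ := ih h₁ hn
      exact ⟨l, hl₁, hl₂.cons a, hl⟩
  | @cons_cons l₁ l₂ a _ ih =>
    obtain ⟨l, hl₁, hl₂, hl⟩ := ih (n := n - 1) (by simp at h₁; omega) (by simp at h₂; omega)
    exact ⟨a :: l, hl₁.cons_cons a, hl₂.cons_cons a, by simp at h₁ ⊢; omega⟩

theorem hProd_cons_of_ne_nil (a : A) {l : List A} (hl : l ≠ []) :
    hProd (a :: l) = ⋃ c ∈ hProd l, hmul a c := by
  cases l with
  | nil => contradiction
  | cons b t => rfl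

theorem exists_mem_hmul_assoc (a b d z : A) :
    (∃ c ∈ hmul b d, z ∈ hmul a c) ↔ ∃ e ∈ hmul a b, z ∈ hmul e d := by
  simpa using congrArg (z ∈ ·) (hmul_assoc a b d)

theorem mem_hProd_cons_cons (a b z : A) {l : List A} (hl : l ≠ []) :
    z ∈ hProd (a :: b :: l) ↔ ∃ d ∈ hProd l, ∃ e ∈ hmul a b, z ∈ hmul e d := by
  simp only [hProd_cons_of_ne_nil _ (List.cons_ne_nil _ _), hProd_cons_of_ne_nil _ hl,
    Set.mem_iUnion, exists_prop]
  constructor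
  · rintro ⟨c, ⟨d, hd, hc⟩, hz⟩
    exact ⟨d, hd, (exists_mem_hmul_assoc a b d z).1 ⟨c, hc, hz⟩⟩
  · rintro ⟨d, hd, he⟩
    obtain ⟨c, hc, hz⟩ := (exists_mem_hmul_assoc a b d z).2 he
    exact ⟨c, ⟨d, hd, hc⟩, hz⟩

theorem hProd_swap (a b : A) (l : List A) : hProd (a :: b :: l) = hProd (b :: a :: l) := by
  rcases eq_or_ne l [] with rfl | hl
  · simp [hProd, hmul_comm]
  · ext z
    rw [mem_hProd_cons_cons _ _ _ hl, mem_hProd_cons_cons _ _ _ hl, hmul_comm a b]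

theorem List.Perm.hProd_eq {l l' : List A} (h : l.Perm l') : hProd l = hProd l' := by
  induction h with
  | nil => rfl
  | @cons a t t' h ih =>
    rcases eq_or_ne t [] with rfl | ht
    · rw [List.Perm.nil_eq h]
    · have ht' : t' ≠ [] := by rintro rfl; exact ht h.eq_nil
      rw [hProd_cons_of_ne_nil a ht, hProd_cons_of_ne_nil a ht', ih]
  | swap a b t => exact hProd_swap b a t
  | trans _ _ ih₁ ih₂ => exact ih₁.trans ih₂

namespace IsHyperideal

variable {Q : Set A} (hQ : IsHyperideal Q)
include hQ

theorem hProd_cons_subset (x : A) {l : List A} (h : hProd l ⊆ Q) : hProd (x :: l) ⊆ Q := by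
  rcases eq_or_ne l [] with rfl | hl
  · exact Set.singleton_subset_iff.2 (hQ.2.2 x 1 (h rfl) (one_mem x))
  · rw [hProd_cons_of_ne_nil x hl]
    exact Set.iUnion₂_subset fun c hc => hQ.2.2 x c (h hc)

theorem hProd_append_subset (c : List A) {l : List A} (h : hProd l ⊆ Q) :
    hProd (c ++ l) ⊆ Q := by
  induction c with
  | nil => exact h
  | cons x c ih => exact hQ.hProd_cons_subset x ih

theorem hProd_subset_of_sublist {m n : List A} (h : m.Sublist n) (hm : hProd m ⊆ Q) :
    hProd n ⊆ Q := by
  obtain ⟨c, hc⟩ := h.exists_perm_append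
  rw [hc.hProd_eq, List.perm_append_comm.hProd_eq]
  exact hQ.hProd_append_subset c hm

theorem colonH_subset_of_isUnitH {x : A} (hx : IsUnitH x) : colonH Q x ⊆ Q := by
  obtain ⟨y, hy⟩ := hx
  intro p hp
  obtain ⟨e, he, hpe⟩ := (exists_mem_hmul_assoc p x y p).1 ⟨1, hy, one_mem p⟩
  exact hQ.2.2 y e (hp he) (by rwa [hmul_comm])

theorem hProd_subset_of_cons {x : A} (hx : colonH Q x ⊆ Q) {l : List A}
    (h : hProd (x :: l) ⊆ Q) : hProd l ⊆ Q := by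
  rcases eq_or_ne l [] with rfl | hl
  · exact Set.singleton_subset_iff.2 (hx (hQ.2.2 1 x (h rfl)))
  · intro p hp
    refine hx fun z hz => h ?_
    rw [hProd_cons_of_ne_nil x hl]
    exact Set.mem_biUnion hp (by rwa [hmul_comm])

theorem hProd_subset_of_append {m c : List A} (hc : ∀ x ∈ c, colonH Q x ⊆ Q)
    (h : hProd (m ++ c) ⊆ Q) : hProd m ⊆ Q := by
  rw [List.perm_append_comm.hProd_eq] at h
  induction c with
  | nil => simpa using h
  | cons x c ih =>
    exact ih (fun y hy => hc y (List.mem_cons_of_mem x hy))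
      (hQ.hProd_subset_of_cons (hc x List.mem_cons_self) h)

theorem exists_sublist_forall_not_isUnitH_hProd_subset {l : List A} (h : hProd l ⊆ Q) :
    ∃ m : List A, m.Sublist l ∧ (∀ x ∈ m, ¬IsUnitH x) ∧ hProd m ⊆ Q := by
  classical
  refine ⟨l.filter fun x => ¬IsUnitH x, List.filter_sublist, by simp, ?_⟩
  refine hQ.hProd_subset_of_append (c := l.filter fun x => !decide ¬IsUnitH x) ?_ ?_
  · intro x hx
    exact hQ.colonH_subset_of_isUnitH (by simpa using (List.mem_filter.1 hx).2)
  · rwa [(List.filter_append_perm _ l).hProd_eq]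

end IsHyperideal

theorem IsStrongCHyperideal.colonH_add_one_subset {Q : Set A} (hQ : IsStrongCHyperideal Q)
    {a : A} (ha : a ∈ Q) : colonH Q (a + 1) ⊆ Q := by
  intro p hp
  have hD : sumProds [[p, a], [p, 1]] = setAdd (hmul p a) (hmul p 1) := by
    simp [sumProds, setAdd, hProd]
  obtain ⟨q, hq⟩ := hmul_nonempty p (a + 1)
  have hDQ : sumProds [[p, a], [p, 1]] ⊆ Q :=
    hQ.2 _ (by simp) (by simp) ⟨q, hD ▸ hmul_add p a 1 hq, hp hq⟩
  obtain ⟨r, hr⟩ := hmul_nonempty p a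
  have hrp : r + p ∈ Q := hDQ (hD ▸ Set.mem_image2_of_mem hr (one_mem p))
  simpa using hQ.1.2.1 _ hrp r (hQ.1.2.2 p a ha hr)

theorem IsUVAbsorbing.exists_sublist_length_le_hProd_subset {Q : Set A} {u v : ℕ}
    (hQ : IsUVAbsorbing Q u v) (hC : IsStrongCHyperideal Q) {a : A} (ha : a ∈ Q)
    (hau : ¬IsUnitH (a + 1)) {m : List A} (hm : m.length ≤ u) (hmu : ∀ x ∈ m, ¬IsUnitH x)
    (hmQ : hProd m ⊆ Q) : ∃ l, l.Sublist m ∧ l.length ≤ v ∧ hProd l ⊆ Q := by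
  set M := m ++ List.replicate (u - m.length) (a + 1)
  have hMu : ∀ x ∈ M, ¬IsUnitH x := by
    intro x hx
    rcases List.mem_append.1 hx with hx | hx
    · exact hmu x hx
    · rwa [List.eq_of_mem_replicate hx]
  obtain ⟨l, hlM, hlv, hlQ⟩ := hQ.2 M (by simp [M]; omega) hMu
    (hC.1.hProd_subset_of_sublist (List.sublist_append_left _ _) hmQ)
  obtain ⟨l₁, l₂, rfl, h₁, h₂⟩ := List.sublist_append_iff.1 hlM
  refine ⟨l₁, h₁, by simp at hlv; omega, hC.1.hProd_subset_of_append (fun x hx => ?_) hlQ⟩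
  rw [List.eq_of_mem_replicate (h₂.subset hx)]
  exact hC.colonH_add_one_subset ha

theorem ab_uv_absorbing_iff_uv_absorbing_general (Q : Set A)
    (hQ : IsStrongCHyperideal Q)
    (ha : ∃ a ∈ Q, ¬IsUnitH (a + 1)) (u v : ℕ) (hvu : v < u) :
    IsABUVAbsorbing Q u v ↔ IsUVAbsorbing Q u v := by
  refine ⟨fun ⟨hp, h⟩ => ⟨hp, fun l hl _ hlQ => h l hl hlQ⟩,
    fun hUV => ⟨hUV.1, fun l hl hlQ => ?_⟩⟩
  obtain ⟨a, haQ, hau⟩ := ha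
  obtain ⟨m, hml, hmu, hmQ⟩ := hQ.1.exists_sublist_forall_not_isUnitH_hProd_subset hlQ
  obtain ⟨l₁, hl₁m, hl₁v, hl₁Q⟩ :=
    hUV.exists_sublist_length_le_hProd_subset hQ haQ hau (hl ▸ hml.length_le) hmu hmQ
  obtain ⟨l', hl₁l', hl'l, hl'v⟩ := (hl₁m.trans hml).exists_sublist_length_eq hl₁v (by omega)
  exact ⟨l', hl'l, hl'v, hQ.1.hProd_subset_of_sublist hl₁l' hl₁Q⟩

/-- for a proper strong `𝒞`-hyperideal `Q` with `a+1 ∉ U(A)` for some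
`a ∈ Q`, `Q` is `AB`-`(u,v)`-absorbing iff `Q` is `(u,v)`-absorbing. -/
theorem ab_uv_absorbing_iff_uv_absorbing (Q : Set A)
    (hQ : IsStrongCHyperideal Q) (hproper : Q ≠ Set.univ)
    (ha : ∃ a ∈ Q, ¬IsUnitH (a + 1)) (u v : ℕ) (hv : 1 ≤ v) (hvu : v < u) :
    IsABUVAbsorbing Q u v ↔ IsUVAbsorbing Q u v :=
  ab_uv_absorbing_iff_uv_absorbing_general Q hQ ha u v hvu
end
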